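/- arXiv:2010.00895 — 2 statements merged into one kernel-verified Lean document; each statement's English description precedes it below -/
import Mathlib

section
/- Let τ ∈ ℝ \ {0,±1}, v > 0, and ω > v²/(τ²+1)². Then there exists C > 0 such that for every u ∈ H¹_τ, ‖u'‖²₂ − v|u(0−)|² + ω‖u‖²₂ ≥ C ‖u‖²_{H¹_τ}. -/
open MeasureTheory Set Filter Real

noncomputable section

structure HtauFun (τ : ℝ) where
  u : ℝ → ℝ
  d : ℝ → ℝ
  uL : ℝ
  uR : ℝ
  hderiv : ∀ x : ℝ, x ≠ 0 → HasDerivAt u (d x) x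
  hlimL : Tendsto u (nhdsWithin 0 (Iio 0)) (nhds uL)
  hlimR : Tendsto u (nhdsWithin 0 (Ioi 0)) (nhds uR)
  hint2 : Integrable (fun x => (u x) ^ 2)
  hintd : Integrable (fun x => (d x) ^ 2)
  hjump : uR = τ * uL

def dnormSq (g : ℝ → ℝ) : ℝ :=
  (∫ x in Iio (0:ℝ), (g x) ^ 2) + ∫ x in Ioi (0:ℝ), (g x) ^ 2

def l2Sq (f : ℝ → ℝ) : ℝ := ∫ x : ℝ, (f x) ^ 2

def HnormSq (f g : ℝ → ℝ) : ℝ := l2Sq f + dnormSq g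

/-!
Since `(u²)' = 2uu'` on each half-line and `u²` vanishes at `±∞`, the one-sided traces satisfy
`u(0−)² = ∫_{-∞}^0 2uu'` and `u(0+)² = -∫_0^∞ 2uu'`. Young's inequality `2|uu'| ≤ ε u² + ε⁻¹ u'²`
and the jump condition `u(0+) = τ u(0−)` then give `(1 + τ²) u(0−)² ≤ ε ‖u‖² + ε⁻¹ ‖u'‖²` for every
`ε > 0`. With `k = v / (1 + τ²)` and `ε = √ω`, the form is at least
`(1 - k/√ω) ‖u'‖² + √ω (√ω - k) ‖u‖²`, and both coefficients are positive because `k² < ω`.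
-/

open Topology

section ImproperFTC

variable {E : Type*} [NormedAddCommGroup E] [NormedSpace ℝ E] [CompleteSpace E]
  {f f' : ℝ → E} {a : ℝ} {L : E}

theorem integral_Ioi_of_hasDerivAt_of_tendsto_nhdsGT
    (hderiv : ∀ x ∈ Ioi a, HasDerivAt f (f' x) x) (f'int : IntegrableOn f' (Ioi a))
    (fint : IntegrableOn f (Ioi a)) (hL : Tendsto f (𝓝[>] a) (𝓝 L)) :
    ∫ x in Ioi a, f' x = -L := by
  classical
  -- the value `f a` is irrelevant; replacing it by `L` makes `f` continuous on `[a, ∞)`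
  have hcont : ContinuousWithinAt (Function.update f a L) (Ici a) a := by
    rwa [continuousWithinAt_update_same, Ici_sdiff_left]
  have hderiv' : ∀ x ∈ Ioi a, HasDerivAt (Function.update f a L) (f' x) x := fun x hx =>
    (hderiv x hx).congr_of_eventuallyEq <| by
      filter_upwards [Ioi_mem_nhds hx] with y hy
      exact Function.update_of_ne hy.ne' _ _
  have hzero : Tendsto (Function.update f a L) atTop (𝓝 0) :=
    (tendsto_zero_of_hasDerivAt_of_integrableOn_Ioi hderiv f'int fint).congr' <| by
      filter_upwards [Ioi_mem_atTop a] with y hy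
      exact (Function.update_of_ne hy.ne' _ _).symm
  rw [integral_Ioi_of_hasDerivAt_of_tendsto hcont hderiv' f'int hzero,
    Function.update_self, zero_sub]

theorem integral_Iio_of_hasDerivAt_of_tendsto_nhdsLT
    (hderiv : ∀ x ∈ Iio a, HasDerivAt f (f' x) x) (f'int : IntegrableOn f' (Iio a))
    (fint : IntegrableOn f (Iio a)) (hL : Tendsto f (𝓝[<] a) (𝓝 L)) :
    ∫ x in Iio a, f' x = L := by
  classical
  have hcont : ContinuousWithinAt (Function.update f a L) (Iic a) a := by
    rwa [continuousWithinAt_update_same, Iic_sdiff_right]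
  have hderiv' : ∀ x ∈ Iio a, HasDerivAt (Function.update f a L) (f' x) x := fun x hx =>
    (hderiv x hx).congr_of_eventuallyEq <| by
      filter_upwards [Iio_mem_nhds hx] with y hy
      exact Function.update_of_ne hy.ne _ _
  have hIic : Iic (a - 1) ⊆ Iio a := Iic_subset_Iio.2 (sub_one_lt a)
  have hzero : Tendsto (Function.update f a L) atBot (𝓝 0) :=
    (tendsto_zero_of_hasDerivAt_of_integrableOn_Iic (fun x hx => hderiv x (hIic hx))
      (f'int.mono_set hIic) (fint.mono_set hIic)).congr' <| by
      filter_upwards [Iio_mem_atBot a] with y hy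
      exact (Function.update_of_ne hy.ne _ _).symm
  rw [← integral_Iic_eq_integral_Iio, integral_Iic_of_hasDerivAt_of_tendsto hcont hderiv'
    ((integrableOn_Iic_iff_integrableOn_Iio).2 f'int) hzero, Function.update_self, sub_zero]

end ImproperFTC

theorem l2Sq_nonneg (f : ℝ → ℝ) : 0 ≤ l2Sq f :=
  integral_nonneg fun _ => sq_nonneg _

theorem dnormSq_nonneg (g : ℝ → ℝ) : 0 ≤ dnormSq g :=
  add_nonneg (setIntegral_nonneg measurableSet_Iio fun _ _ => sq_nonneg _)
    (setIntegral_nonneg measurableSet_Ioi fun _ _ => sq_nonneg _)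

theorem l2Sq_eq_dnormSq {f : ℝ → ℝ} (hf : Integrable fun x => f x ^ 2) :
    l2Sq f = dnormSq f := by
  rw [l2Sq, dnormSq, ← integral_Iic_eq_integral_Iio]
  exact (intervalIntegral.integral_Iic_add_Ioi hf.integrableOn hf.integrableOn).symm

namespace HtauFun

variable {τ : ℝ} (U : HtauFun τ)

theorem aemeasurable_u : AEMeasurable U.u := by
  have hcont : ContinuousOn U.u {0}ᶜ := fun x hx =>
    (U.hderiv x hx).continuousAt.continuousWithinAt
  simpa only [restrict_compl_singleton] using
    hcont.aemeasurable (μ := volume) (measurableSet_singleton 0).compl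

theorem aemeasurable_d : AEMeasurable U.d := by
  have h0 : ∀ᵐ x : ℝ, x ≠ 0 := compl_mem_ae_iff.2 (measure_singleton 0)
  exact (measurable_deriv U.u).aemeasurable.congr <| h0.mono fun x hx => (U.hderiv x hx).deriv

theorem integrable_two_mul_u_mul_d : Integrable fun x => 2 * U.u x * U.d x := by
  refine (U.hint2.add U.hintd).mono'
    ((U.aemeasurable_u.const_mul 2).mul U.aemeasurable_d).aestronglyMeasurable
    (Eventually.of_forall fun x => ?_)
  rw [Pi.add_apply, Real.norm_eq_abs, abs_le]
  constructor <;> nlinarith [sq_nonneg (U.u x + U.d x), sq_nonneg (U.u x - U.d x)]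

theorem hasDerivAt_sq {x : ℝ} (hx : x ≠ 0) :
    HasDerivAt (fun y => U.u y ^ 2) (2 * U.u x * U.d x) x :=
  ((U.hderiv x hx).fun_pow 2).congr_deriv (by ring)

theorem sq_uL_eq_integral_Iio : U.uL ^ 2 = ∫ x in Iio 0, 2 * U.u x * U.d x :=
  (integral_Iio_of_hasDerivAt_of_tendsto_nhdsLT (fun _ hx => U.hasDerivAt_sq hx.ne)
    U.integrable_two_mul_u_mul_d.integrableOn U.hint2.integrableOn (U.hlimL.pow 2)).symm

theorem sq_uR_eq_neg_integral_Ioi : U.uR ^ 2 = -∫ x in Ioi 0, 2 * U.u x * U.d x := by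
  rw [integral_Ioi_of_hasDerivAt_of_tendsto_nhdsGT (fun _ hx => U.hasDerivAt_sq hx.ne')
    U.integrable_two_mul_u_mul_d.integrableOn U.hint2.integrableOn (U.hlimR.pow 2), neg_neg]

theorem sq_add_one_mul_sq_uL_le {ε : ℝ} (hε : 0 < ε) :
    (τ ^ 2 + 1) * U.uL ^ 2 ≤ ε * l2Sq U.u + ε⁻¹ * dnormSq U.d := by
  set B : ℝ → ℝ := fun x => ε * U.u x ^ 2 + ε⁻¹ * U.d x ^ 2
  have hB : Integrable B := (U.hint2.const_mul ε).add (U.hintd.const_mul ε⁻¹)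
  have hleft : U.uL ^ 2 ≤ ∫ x in Iio 0, B x := by
    rw [U.sq_uL_eq_integral_Iio]
    exact setIntegral_mono U.integrable_two_mul_u_mul_d.integrableOn hB.integrableOn
      fun x => two_mul_le_add_mul_sq hε
  have hright : U.uR ^ 2 ≤ ∫ x in Ioi 0, B x := by
    rw [U.sq_uR_eq_neg_integral_Ioi, ← integral_neg]
    refine setIntegral_mono U.integrable_two_mul_u_mul_d.neg.integrableOn hB.integrableOn
      fun x => ?_
    have := two_mul_le_add_mul_sq hε (a := -U.u x) (b := U.d x)
    rw [neg_sq] at this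
    linarith
  have hB_integral : ∀ s : Set ℝ, ∫ x in s, B x
      = ε * (∫ x in s, U.u x ^ 2) + ε⁻¹ * ∫ x in s, U.d x ^ 2 := fun s => by
    rw [integral_add (U.hint2.integrableOn.const_mul ε) (U.hintd.integrableOn.const_mul ε⁻¹),
      integral_const_mul, integral_const_mul]
  have hjump : U.uR ^ 2 = τ ^ 2 * U.uL ^ 2 := by rw [U.hjump, mul_pow]
  rw [hB_integral] at hleft hright
  rw [l2Sq_eq_dnormSq U.hint2, dnormSq, dnormSq]
  linarith

end HtauFun

theorem coercivity_Htau_general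
    (τ v ω : ℝ) (hv : 0 < v)
    (hω : ω > v ^ 2 / (τ ^ 2 + 1) ^ 2) :
    ∃ C : ℝ, 0 < C ∧ ∀ U : HtauFun τ,
      dnormSq U.d - v * U.uL ^ 2 + ω * l2Sq U.u ≥ C * HnormSq U.u U.d := by
  set k := v / (τ ^ 2 + 1)
  have hk : 0 < k := by positivity
  have hks : k < √ω := (Real.lt_sqrt hk.le).2 (by rwa [div_pow])
  have hs : 0 < √ω := hk.trans hks
  refine ⟨min (1 - k * (√ω)⁻¹) (√ω * (√ω - k)), lt_min ?_ (mul_pos hs (sub_pos.2 hks)),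
    fun U => ?_⟩
  · rwa [sub_pos, ← div_eq_mul_inv, div_lt_one hs]
  have htrace := U.sq_add_one_mul_sq_uL_le hs
  have hvk : v * U.uL ^ 2 = k * ((τ ^ 2 + 1) * U.uL ^ 2) := by
    simp only [k]; field_simp
  have hω_sq : ω = √ω * √ω :=
    (Real.mul_self_sqrt ((by positivity : 0 ≤ v ^ 2 / (τ ^ 2 + 1) ^ 2).trans hω.le)).symm
  rw [HnormSq, ge_iff_le]
  linarith [mul_le_mul_of_nonneg_left htrace hk.le, congrArg (· * l2Sq U.u) hω_sq,
    mul_le_mul_of_nonneg_right (min_le_left (1 - k * (√ω)⁻¹) (√ω * (√ω - k)))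
      (dnormSq_nonneg U.d),
    mul_le_mul_of_nonneg_right (min_le_right (1 - k * (√ω)⁻¹) (√ω * (√ω - k)))
      (l2Sq_nonneg U.u)]

/-- coercivity: if `ω > v²/(τ²+1)²` then there is `C > 0` such that for all
`u ∈ H¹_τ` one has `‖u'‖₂² - v|u(0-)|² + ω‖u‖₂² ≥ C‖u‖²_{H¹_τ}`. -/
theorem coercivity_Htau
    (τ v ω : ℝ) (hτ0 : τ ≠ 0) (hτ1 : τ ≠ 1) (hτm1 : τ ≠ -1) (hv : 0 < v)
    (hω : ω > v ^ 2 / (τ ^ 2 + 1) ^ 2) :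
    ∃ C : ℝ, 0 < C ∧ ∀ U : HtauFun τ,
      dnormSq U.d - v * U.uL ^ 2 + ω * l2Sq U.u ≥ C * HnormSq U.u U.d :=
  coercivity_Htau_general τ v ω hv hω
end
end

section
/- Let τ > 0, τ ∉ {0,1}, v > 0, μ > 0, ω > 0. A function of the form u(x) = φ_ω(x + x₋) on ℝ₋ and u(x) = φ_ω(x + x₊) on ℝ₊, with φ_ω(x) = (ω(μ+1))^{1/(2μ)} cosh^{−1/μ}(μ√ω x), satisfies the Fülöp–Tsutsui conditions u(0+) = τu(0−) and u'(0−) − τu'(0+) = vu(0−) if and only if T_± = tanh(μ√ω x_±) solve the system: T₊ = (1/τ²)(T₋ + v/√ω) and T₋²/(1 − τ^{−2μ}) − T₊²/(τ^{2μ} − 1) = 1. -/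
open Set Filter Real

noncomputable section

/-- The one-dimensional NLS soliton `φ_ω(x) = (ω(μ+1))^{1/(2μ)} cosh^{-1/μ}(μ√ω x)`. -/
def soliton (μ ω : ℝ) (x : ℝ) : ℝ :=
  (ω * (μ + 1)) ^ (1 / (2 * μ)) * (Real.cosh (μ * Real.sqrt ω * x)) ^ (-(1 / μ))

/-!
Since `φ_ω^{2μ} = ω(μ+1) cosh⁻²(μ√ω x) = ω(μ+1)(1 - tanh²(μ√ω x))` and `φ_ω > 0`, the continuity
condition `φ_ω(x₊) = τ φ_ω(x₋)` is equivalent to `1 - T₊² = τ^{2μ}(1 - T₋²)`, which for `τ ≠ 1` is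
the second equation of the system. Given continuity, `φ_ω' = -√ω φ_ω tanh(μ√ω ·)` turns the jump
condition into `√ω(τ²T₊ - T₋) = v` after cancelling `φ_ω(x₋) ≠ 0`, i.e. the first equation.
-/

lemma Real.one_sub_tanh_sq (y : ℝ) : 1 - tanh y ^ 2 = (cosh y ^ 2)⁻¹ := by
  have hc : cosh y ≠ 0 := (cosh_pos y).ne'
  rw [tanh_eq_sinh_div_cosh]
  field_simp
  linarith [cosh_sq_sub_sinh_sq y]

lemma Real.rpow_ne_one_of_ne_one {x : ℝ} (hx : 0 ≤ x) (hx1 : x ≠ 1) {z : ℝ} (hz : z ≠ 0) :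
    x ^ z ≠ 1 := by
  rwa [← one_rpow z, Ne, rpow_left_inj hx zero_le_one hz]

lemma div_one_sub_inv_sub_div_sub_one_eq_one_iff {K : Type*} [Field K] {A a b : K}
    (hA : A ≠ 0) (hA1 : A ≠ 1) :
    a / (1 - A⁻¹) - b / (A - 1) = 1 ↔ 1 - b = A * (1 - a) := by
  have hA1' : A - 1 ≠ 0 := sub_ne_zero.mpr hA1
  have hcombine : a / (1 - A⁻¹) - b / (A - 1) = (A * a - b) / (A - 1) := by
    field_simp
  rw [hcombine, div_eq_one_iff_eq hA1']
  constructor <;> intro h <;> linear_combination h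

section Soliton

variable {μ ω : ℝ}

lemma soliton_pos (hμ : 0 < μ) (hω : 0 < ω) (x : ℝ) : 0 < soliton μ ω x := by
  unfold soliton
  positivity

lemma soliton_rpow_two_mul (hμ : 0 < μ) (hω : 0 < ω) (x : ℝ) :
    soliton μ ω x ^ (2 * μ) = ω * (μ + 1) * (1 - tanh (μ * √ω * x) ^ 2) := by
  have hK : 0 ≤ ω * (μ + 1) := by positivity
  have hc := cosh_pos (μ * √ω * x)
  rw [soliton, mul_rpow (by positivity) (by positivity), ← rpow_mul hK, ← rpow_mul hc.le,
    one_sub_tanh_sq, one_div_mul_cancel (by positivity), rpow_one,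
    show -(1 / μ) * (2 * μ) = -(2 : ℕ) by field_simp; norm_num, rpow_neg hc.le, rpow_natCast]

lemma soliton_hasDerivAt (hμ : 0 < μ) (x : ℝ) :
    HasDerivAt (soliton μ ω) (-√ω * soliton μ ω x * tanh (μ * √ω * x)) x := by
  have hc : cosh (μ * √ω * x) ≠ 0 := (cosh_pos _).ne'
  have h : HasDerivAt (soliton μ ω) ((ω * (μ + 1)) ^ (1 / (2 * μ)) *
      (sinh (μ * √ω * x) * (μ * √ω * 1) * -(1 / μ) * cosh (μ * √ω * x) ^ (-(1 / μ) - 1))) x :=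
    (((hasDerivAt_id x).const_mul _).cosh.rpow_const (Or.inl hc)).const_mul _
  refine h.congr_deriv ?_
  rw [soliton, tanh_eq_sinh_div_cosh, rpow_sub_one hc]
  field_simp

lemma soliton_eq_mul_iff {τ : ℝ} (hτ : 0 < τ) (hμ : 0 < μ) (hω : 0 < ω) (x y : ℝ) :
    soliton μ ω y = τ * soliton μ ω x ↔
      1 - tanh (μ * √ω * y) ^ 2 = τ ^ (2 * μ) * (1 - tanh (μ * √ω * x) ^ 2) := by
  have hx := soliton_pos hμ hω x
  have hK : ω * (μ + 1) ≠ 0 := by positivity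
  rw [← rpow_left_inj (soliton_pos hμ hω y).le (by positivity) (by positivity : 2 * μ ≠ 0),
    mul_rpow hτ.le hx.le, soliton_rpow_two_mul hμ hω, soliton_rpow_two_mul hμ hω, mul_left_comm,
    mul_right_inj' hK]

lemma deriv_soliton_jump_iff {τ v : ℝ} (hτ : τ ≠ 0) (hμ : 0 < μ) (hω : 0 < ω) {x y : ℝ}
    (hxy : soliton μ ω y = τ * soliton μ ω x) :
    deriv (soliton μ ω) x - τ * deriv (soliton μ ω) y = v * soliton μ ω x ↔
      tanh (μ * √ω * y) = 1 / τ ^ 2 * (tanh (μ * √ω * x) + v / √ω) := by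
  have hs : √ω ≠ 0 := (sqrt_pos.mpr hω).ne'
  have hx : soliton μ ω x ≠ 0 := (soliton_pos hμ hω x).ne'
  rw [(soliton_hasDerivAt hμ x).deriv, (soliton_hasDerivAt hμ y).deriv, hxy]
  generalize tanh (μ * √ω * x) = Tx, tanh (μ * √ω * y) = Ty
  have hfactor : ∀ φ : ℝ, -√ω * φ * Tx - τ * (-√ω * (τ * φ) * Ty) = √ω * (τ ^ 2 * Ty - Tx) * φ :=
    fun φ ↦ by ring
  rw [hfactor, mul_left_inj' hx, mul_comm √ω, ← eq_div_iff hs, sub_eq_iff_eq_add', one_div,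
    eq_inv_mul_iff_mul_eq₀ (pow_ne_zero 2 hτ), mul_comm]

end Soliton

theorem soliton_matching_iff_general
    (τ v ω μ : ℝ) (hτ : 0 < τ) (hτ1 : τ ≠ 1) (hμ : 0 < μ) (hω : 0 < ω)
    (xm xp Tm Tp : ℝ)
    (hTm : Tm = Real.tanh (μ * Real.sqrt ω * xm))
    (hTp : Tp = Real.tanh (μ * Real.sqrt ω * xp)) :
    (soliton μ ω xp = τ * soliton μ ω xm ∧
      deriv (soliton μ ω) xm - τ * deriv (soliton μ ω) xp = v * soliton μ ω xm)
    ↔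
    (Tp = 1 / τ ^ 2 * (Tm + v / Real.sqrt ω) ∧
      Tm ^ 2 / (1 - τ ^ (-(2 * μ))) - Tp ^ 2 / (τ ^ (2 * μ) - 1) = 1) := by
  have hA : τ ^ (2 * μ) ≠ 1 := rpow_ne_one_of_ne_one hτ.le hτ1 (by positivity)
  subst hTm hTp
  rw [rpow_neg hτ.le,
    div_one_sub_inv_sub_div_sub_one_eq_one_iff (rpow_pos_of_pos hτ _).ne' hA,
    ← soliton_eq_mul_iff hτ hμ hω]
  exact (and_congr_right (deriv_soliton_jump_iff hτ.ne' hμ hω)).trans and_comm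

/-- a two-sided soliton profile `u(x) = φ_ω(x + x₋)` on `ℝ₋`,
`u(x) = φ_ω(x + x₊)` on `ℝ₊` satisfies the Fülöp–Tsutsui conditions
`u(0+) = τ u(0-)` and `u'(0-) - τ u'(0+) = v u(0-)` if and only if
`T_± = tanh(μ√ω x_±)` solve the matching system. -/
theorem soliton_matching_iff
    (τ v ω μ : ℝ) (hτ : 0 < τ) (hτ1 : τ ≠ 1) (hv : 0 < v) (hμ : 0 < μ) (hω : 0 < ω)
    (xm xp Tm Tp : ℝ)
    (hTm : Tm = Real.tanh (μ * Real.sqrt ω * xm))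
    (hTp : Tp = Real.tanh (μ * Real.sqrt ω * xp)) :
    (soliton μ ω xp = τ * soliton μ ω xm ∧
      deriv (soliton μ ω) xm - τ * deriv (soliton μ ω) xp = v * soliton μ ω xm)
    ↔
    (Tp = 1 / τ ^ 2 * (Tm + v / Real.sqrt ω) ∧
      Tm ^ 2 / (1 - τ ^ (-(2 * μ))) - Tp ^ 2 / (τ ^ (2 * μ) - 1) = 1) :=
  soliton_matching_iff_general τ v ω μ hτ hτ1 hμ hω xm xp Tm Tp hTm hTp
end
end
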